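/- arXiv:2004.01850 — 4 statements merged into one kernel-verified Lean document; each statement's English description precedes it below -/
import Mathlib

section
/- Let A and B be nonnegative, positively quadrant dependent random variables, suppose B is an IED^ρ_H(γ)-random variable for some γ ∈ [0,∞], and let a = ess inf(A) = sup{x ∈ ℝ : P(A < x) = 0}. Then (A,B) admits the (ρ,H)-local dependence measure g given by g(y) = γ(1-ay)^{-ρ} for y ∈ [0,1/a) and g(y) = ∞ for y ≥ 1/a (if a = 0 then g(y) = γ for all y ≥ 0). -/
open MeasureTheory ProbabilityTheory Filter Set Topology
open scoped ENNReal

/-- `-log p`, valued in `[0,∞]`, with the convention `-log 0 = ∞`. -/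
noncomputable def negLog (p : ℝ≥0∞) : ℝ≥0∞ :=
  if p = 0 then ⊤ else ENNReal.ofReal (-Real.log p.toReal)

/-- `H` is positive, continuous and strictly decreasing on `(0,∞)`, and regularly
varying at `0` with index `-ρ < 0`. -/
structure IsRVatZero (H : ℝ → ℝ) (ρ : ℝ) : Prop where
  rho_pos : 0 < ρ
  pos : ∀ x ∈ Set.Ioi (0:ℝ), 0 < H x
  contOn : ContinuousOn H (Set.Ioi 0)
  anti : StrictAntiOn H (Set.Ioi 0)
  rv : ∀ y ∈ Set.Ioi (0:ℝ),
    Filter.Tendsto (fun x => H (y * x) / H x) (nhdsWithin 0 (Set.Ioi 0)) (nhds (y ^ (-ρ)))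

/-- `X` is an `IED^ρ_H(l)`-random variable with respect to `μ`:
`lim_{ε→0⁺} (-log P(X < ε))/H(ε) = l`. -/
def IsIED {Ω : Type*} [MeasurableSpace Ω] (μ : Measure Ω) (X : Ω → ℝ)
    (H : ℝ → ℝ) (l : ℝ≥0∞) : Prop :=
  Filter.Tendsto (fun ε => negLog (μ {ω | X ω < ε}) / ENNReal.ofReal (H ε))
    (nhdsWithin 0 (Set.Ioi 0)) (nhds l)

/-- `g` is the `(ρ,H)`-local dependence measure of the pair `(A,B)`:
`g(y) = lim_{ε→0⁺} (-log P(εAy + B < ε))/H(ε)` for every `y ≥ 0`. -/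
def IsLDM {Ω : Type*} [MeasurableSpace Ω] (μ : Measure Ω) (A B : Ω → ℝ)
    (H : ℝ → ℝ) (g : ℝ → ℝ≥0∞) : Prop :=
  ∀ y : ℝ, 0 ≤ y →
    Filter.Tendsto (fun ε => negLog (μ {ω | ε * A ω * y + B ω < ε}) / ENNReal.ofReal (H ε))
      (nhdsWithin 0 (Set.Ioi 0)) (nhds (g y))

/-- The Legendre-type transform `φ_ρ(λ) = inf_{y>0} { g(y) + λ/y^ρ }`. -/
noncomputable def phi (g : ℝ → ℝ≥0∞) (ρ : ℝ) (l : ℝ≥0∞) : ℝ≥0∞ :=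
  ⨅ y ∈ Set.Ioi (0:ℝ), (g y + l / ENNReal.ofReal (y ^ ρ))

/-- `λ* = inf_{y>1} { (y^ρ/(y^ρ-1)) g(y) }`. -/
noncomputable def lambdaStar (g : ℝ → ℝ≥0∞) (ρ : ℝ) : ℝ≥0∞ :=
  ⨅ y ∈ Set.Ioi (1:ℝ), ENNReal.ofReal (y ^ ρ / (y ^ ρ - 1)) * g y

/-! ### Auxiliary lemmas -/

lemma negLog_anti {p q : ℝ≥0∞} (hq : q ≠ ⊤) (h : p ≤ q) : negLog q ≤ negLog p := by
  unfold negLog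
  rcases eq_or_ne p 0 with hp | hp
  · simp [hp]
  have hq0 : q ≠ 0 := fun h0 => hp (le_antisymm (h0 ▸ h) zero_le)
  rw [if_neg hp, if_neg hq0]
  apply ENNReal.ofReal_le_ofReal
  apply neg_le_neg
  exact Real.log_le_log (ENNReal.toReal_pos hp (ne_top_of_le_ne_top hq h))
    (ENNReal.toReal_le_toReal (ne_top_of_le_ne_top hq h) hq |>.2 h)

lemma negLog_ne_top {p : ℝ≥0∞} (hp : p ≠ 0) : negLog p ≠ ⊤ := by
  simp [negLog, hp]

lemma negLog_mul_le {p q : ℝ≥0∞} (hp : p ≠ ⊤) (hq : q ≠ ⊤) :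
    negLog (p * q) ≤ negLog p + negLog q := by
  rcases eq_or_ne p 0 with h0 | h0; · simp [negLog, h0]
  rcases eq_or_ne q 0 with h1 | h1; · simp [negLog, h1]
  have hpq : p * q ≠ 0 := mul_ne_zero h0 h1
  unfold negLog
  rw [if_neg hpq, if_neg h0, if_neg h1, ENNReal.toReal_mul,
    Real.log_mul (ENNReal.toReal_ne_zero.2 ⟨h0, hp⟩) (ENNReal.toReal_ne_zero.2 ⟨h1, hq⟩),
    neg_add]
  exact ENNReal.ofReal_add_le

lemma H_atTop {H : ℝ → ℝ} {ρ : ℝ} (hH : IsRVatZero H ρ) :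
    Tendsto H (𝓝[>] (0:ℝ)) atTop := by
  have h2 := hH.rv (1/2) (by norm_num)
  have hgt : (1:ℝ) < ((1:ℝ)/2) ^ (-ρ) := by
    rw [Real.one_lt_rpow_iff (by norm_num)]
    right; exact ⟨by norm_num, by norm_num, by linarith [hH.rho_pos]⟩
  set c : ℝ := (1 + ((1:ℝ)/2) ^ (-ρ)) / 2 with hc
  have hc1 : 1 < c := by simp only [hc]; linarith
  have hcl : c < ((1:ℝ)/2) ^ (-ρ) := by simp only [hc]; linarith
  have hev : ∀ᶠ x in 𝓝[>] (0:ℝ), c < H ((1/2) * x) / H x :=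
    h2.eventually (eventually_gt_nhds hcl)
  have hev2 : ∀ᶠ x in 𝓝[>] (0:ℝ), c * H x ≤ H (x / 2) := by
    filter_upwards [hev, self_mem_nhdsWithin] with x hx hx0
    have hHx : 0 < H x := hH.pos x hx0
    have h1 : c * H x < H ((1/2) * x) := by
      calc c * H x < (H ((1/2)*x) / H x) * H x := mul_lt_mul_of_pos_right hx hHx
        _ = H ((1/2)*x) := by field_simp
    have : (1/2:ℝ) * x = x / 2 := by ring
    linarith [this ▸ h1]
  rw [eventually_nhdsWithin_iff] at hev2
  rcases Metric.eventually_nhds_iff.1 hev2 with ⟨δ0, hδ0, hδ⟩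
  set δ := min δ0 1 with hδdef
  have hδpos : 0 < δ := lt_min hδ0 one_pos
  have key : ∀ x, 0 < x → x < δ0 → c * H x ≤ H (x/2) := by
    intro x hx hxδ
    exact hδ (by rw [Real.dist_eq]; rw [sub_zero]; rw [abs_of_pos hx]; exact hxδ) hx
  have hδ2 : 0 < δ/2 := by linarith
  have iter : ∀ n : ℕ, c ^ n * H (δ/2) ≤ H (δ/2 / 2^n) := by
    intro n
    induction n with
    | zero => simp
    | succ n ih =>
      have hx : (0:ℝ) < δ/2/2^n := by positivity
      have hxδ : δ/2/2^n < δ0 := by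
        have h1 : δ/2/2^n ≤ δ/2 :=
          div_le_self (by positivity) (one_le_pow₀ (by norm_num))
        have : δ ≤ δ0 := min_le_left _ _
        linarith
      have hstep : c * H (δ/2/2^n) ≤ H (δ/2/2^(n+1)) := by
        have : δ/2/2^n/2 = δ/2/2^(n+1) := by ring
        linarith [this ▸ key _ hx hxδ]
      calc c^(n+1) * H (δ/2) = c * (c^n * H (δ/2)) := by ring
        _ ≤ c * H (δ/2/2^n) := by
            apply mul_le_mul_of_nonneg_left ih (by linarith)
        _ ≤ H (δ/2/2^(n+1)) := hstep
  rw [tendsto_atTop]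
  intro M
  have hHδ2 : 0 < H (δ/2) := hH.pos _ hδ2
  obtain ⟨n, hn⟩ : ∃ n : ℕ, M ≤ c ^ n * H (δ/2) := by
    obtain ⟨n, hn⟩ := pow_unbounded_of_one_lt (M / H (δ/2)) hc1
    exact ⟨n, by rw [div_lt_iff₀ hHδ2] at hn; linarith⟩
  have hmem : Ioo (0:ℝ) (δ/2/2^n) ∈ 𝓝[>] (0:ℝ) :=
    Ioo_mem_nhdsGT_of_mem ⟨le_refl _, by positivity⟩
  filter_upwards [hmem] with x hx
  have hxp : 0 < x := hx.1
  have : H (δ/2/2^n) ≤ H x := by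
    rcases eq_or_lt_of_le (le_of_lt hx.2) with h | h
    · exact le_of_eq (by rw [h])
    · exact le_of_lt (hH.anti (mem_Ioi.2 hxp) (mem_Ioi.2 (by positivity)) hx.2)
  linarith [iter n]

lemma ennreal_div_mul_div {x b c : ℝ≥0∞} (hb0 : b ≠ 0) (hbt : b ≠ ⊤) :
    x / b * (b / c) = x / c := by
  rw [div_eq_mul_inv, div_eq_mul_inv, div_eq_mul_inv, mul_assoc, ← mul_assoc b⁻¹,
    ENNReal.inv_mul_cancel hb0 hbt, one_mul]

lemma scaled_IED {Ω : Type*} [MeasurableSpace Ω] (μ : Measure Ω) (B : Ω → ℝ)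
    {H : ℝ → ℝ} {ρ : ℝ} (hH : IsRVatZero H ρ) {γ : ℝ≥0∞}
    (hB : Tendsto (fun ε => negLog (μ {ω | B ω < ε}) / ENNReal.ofReal (H ε)) (𝓝[>](0:ℝ)) (𝓝 γ))
    {s : ℝ} (hs : 0 < s) :
    Tendsto (fun ε => negLog (μ {ω | B ω < s * ε}) / ENNReal.ofReal (H ε)) (𝓝[>](0:ℝ))
      (𝓝 (γ * ENNReal.ofReal (s ^ (-ρ)))) := by
  have hmap : Tendsto (fun ε : ℝ => s * ε) (𝓝[>](0:ℝ)) (𝓝[>](0:ℝ)) := by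
    apply tendsto_nhdsWithin_of_tendsto_nhds_of_eventually_within
    · have : Continuous (fun ε : ℝ => s * ε) := continuous_const.mul continuous_id
      simpa using (this.tendsto 0).mono_left nhdsWithin_le_nhds
    · filter_upwards [self_mem_nhdsWithin] with x hx
      exact mul_pos hs hx
  have h1 : Tendsto (fun ε => negLog (μ {ω | B ω < s * ε}) / ENNReal.ofReal (H (s * ε)))
      (𝓝[>](0:ℝ)) (𝓝 γ) := hB.comp hmap
  have h2 : Tendsto (fun ε => ENNReal.ofReal (H (s * ε)) / ENNReal.ofReal (H ε))
      (𝓝[>](0:ℝ)) (𝓝 (ENNReal.ofReal (s ^ (-ρ)))) := by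
    have := ENNReal.tendsto_ofReal (hH.rv s hs)
    apply this.congr'
    filter_upwards [self_mem_nhdsWithin] with x hx
    exact ENNReal.ofReal_div_of_pos (hH.pos x hx)
  have hb0 : ENNReal.ofReal (s ^ (-ρ)) ≠ 0 := by
    simp [ENNReal.ofReal_eq_zero, not_le, Real.rpow_pos_of_pos hs]
  have hprod := ENNReal.Tendsto.mul h1 (Or.inr ENNReal.ofReal_ne_top) h2 (Or.inl hb0)
  apply hprod.congr'
  filter_upwards [self_mem_nhdsWithin] with x hx
  have hsx : (0:ℝ) < s * x := mul_pos hs hx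
  exact ennreal_div_mul_div (by simp [ENNReal.ofReal_eq_zero, not_le, hH.pos _ hsx])
    ENNReal.ofReal_ne_top

lemma pqd_closed {Ω : Type*} [MeasurableSpace Ω] (μ : Measure Ω) [IsProbabilityMeasure μ]
    (A B : Ω → ℝ) (hA : Measurable A) (hB : Measurable B)
    (hPQD : ∀ s t : ℝ, μ {ω | s < A ω} * μ {ω | t < B ω} ≤ μ {ω | s < A ω ∧ t < B ω})
    (s t : ℝ) : μ {ω | A ω ≤ s} * μ {ω | B ω ≤ t} ≤ μ {ω | A ω ≤ s ∧ B ω ≤ t} := by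
  set E : Set Ω := {ω | s < A ω} with hE
  set F : Set Ω := {ω | t < B ω} with hF
  have hEm : MeasurableSet E := measurableSet_lt measurable_const hA
  have hFm : MeasurableSet F := measurableSet_lt measurable_const hB
  have hEc : {ω | A ω ≤ s} = Eᶜ := by ext ω; simp [hE, not_lt]
  have hFc : {ω | B ω ≤ t} = Fᶜ := by ext ω; simp [hF, not_lt]
  have hEFc : {ω | A ω ≤ s ∧ B ω ≤ t} = (E ∪ F)ᶜ := by
    ext ω; simp [hE, hF, not_or, not_lt]
  rw [hEc, hFc, hEFc]
  have h1 : μ (E ∪ F) + μ (E ∩ F) = μ E + μ F := measure_union_add_inter E hFm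
  have hPQ : μ E * μ F ≤ μ (E ∩ F) := by
    have := hPQD s t
    simpa [hE, hF, Set.inter_def] using this
  set e := (μ E).toReal
  set f := (μ F).toReal
  have hE1 : μ E ≤ 1 := prob_le_one
  have hF1 : μ F ≤ 1 := prob_le_one
  have hcE : (μ Eᶜ).toReal = 1 - e := by
    rw [prob_compl_eq_one_sub hEm, ENNReal.toReal_sub_of_le hE1 ENNReal.one_ne_top,
      ENNReal.toReal_one]
  have hcF : (μ Fᶜ).toReal = 1 - f := by
    rw [prob_compl_eq_one_sub hFm, ENNReal.toReal_sub_of_le hF1 ENNReal.one_ne_top,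
      ENNReal.toReal_one]
  have hcU : (μ (E ∪ F)ᶜ).toReal = 1 - (μ (E ∪ F)).toReal := by
    rw [prob_compl_eq_one_sub (hEm.union hFm),
      ENNReal.toReal_sub_of_le prob_le_one ENNReal.one_ne_top, ENNReal.toReal_one]
  rw [← ENNReal.toReal_le_toReal (by finiteness) (by finiteness), ENNReal.toReal_mul,
    hcE, hcF, hcU]
  have h1' : (μ (E ∪ F)).toReal + (μ (E ∩ F)).toReal = e + f := by
    rw [← ENNReal.toReal_add (by finiteness) (by finiteness), h1,
      ENNReal.toReal_add (by finiteness) (by finiteness)]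
  have hPQ' : e * f ≤ (μ (E ∩ F)).toReal := by
    rw [← ENNReal.toReal_mul]
    exact ENNReal.toReal_mono (by finiteness) hPQ
  nlinarith [h1', hPQ']

lemma pqd_mixed {Ω : Type*} [MeasurableSpace Ω] (μ : Measure Ω) [IsProbabilityMeasure μ]
    (A B : Ω → ℝ) (hA : Measurable A) (hB : Measurable B)
    (hPQD : ∀ s t : ℝ, μ {ω | s < A ω} * μ {ω | t < B ω} ≤ μ {ω | s < A ω ∧ t < B ω})
    (s t : ℝ) : μ {ω | A ω ≤ s} * μ {ω | B ω < t} ≤ μ {ω | A ω ≤ s ∧ B ω < t} := by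
  set S : ℕ → Set Ω := fun n => {ω | A ω ≤ s ∧ B ω ≤ t - 1/(n+1)} with hS
  set T : ℕ → Set Ω := fun n => {ω | B ω ≤ t - 1/(n+1)} with hT
  have hmonoT : Monotone T := by
    intro n m hnm ω hω
    simp only [hT, Set.mem_setOf_eq] at hω ⊢
    have : (1:ℝ)/(m+1) ≤ 1/(n+1) := by
      apply one_div_le_one_div_of_le (by positivity)
      have : (n:ℝ) ≤ m := Nat.cast_le.2 hnm
      linarith
    linarith
  have hmonoS : Monotone S := fun n m hnm ω hω => ⟨hω.1, hmonoT hnm hω.2⟩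
  have hUT : {ω | B ω < t} = ⋃ n, T n := by
    ext ω
    simp only [Set.mem_setOf_eq, Set.mem_iUnion, hT]
    constructor
    · intro h
      obtain ⟨n, hn⟩ := exists_nat_one_div_lt (sub_pos.2 h)
      exact ⟨n, by linarith⟩
    · rintro ⟨n, hn⟩
      have : (0:ℝ) < 1/(n+1) := by positivity
      linarith
  have hUS : {ω | A ω ≤ s ∧ B ω < t} = ⋃ n, S n := by
    ext ω
    simp only [Set.mem_setOf_eq, Set.mem_iUnion, hS, hT]
    constructor
    · rintro ⟨h1, h2⟩
      obtain ⟨n, hn⟩ := exists_nat_one_div_lt (sub_pos.2 h2)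
      exact ⟨n, h1, by linarith⟩
    · rintro ⟨n, h1, hn⟩
      have : (0:ℝ) < 1/(n+1) := by positivity
      exact ⟨h1, by linarith⟩
  rw [hUT, hUS, (hmonoS.directed_le).measure_iUnion,
    (hmonoT.directed_le).measure_iUnion, ENNReal.mul_iSup]
  exact iSup_mono fun n => pqd_closed μ A B hA hB hPQD s (t - 1/(n+1))

/-- Proposition `y31.2`.
If `A, B ≥ 0` are positively quadrant dependent, `B` is `IED^ρ_H(γ)`, and
`a = ess inf A = sup{x : P(A < x) = 0}`, then `(A,B)` has the `(ρ,H)`-LDM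
`g(y) = γ (1-ay)^{-ρ}` for `ay < 1` and `g(y) = ∞` otherwise
(in particular `g ≡ γ` when `a = 0`). -/
theorem stmt12 {Ω : Type*} [MeasurableSpace Ω] (μ : Measure Ω) [IsProbabilityMeasure μ]
    (H : ℝ → ℝ) (ρ : ℝ) (hH : IsRVatZero H ρ)
    (A B : Ω → ℝ) (hA : Measurable A) (hB : Measurable B)
    (hA0 : ∀ᵐ ω ∂μ, 0 ≤ A ω) (hB0 : ∀ᵐ ω ∂μ, 0 ≤ B ω)
    -- positive quadrant dependence
    (hPQD : ∀ s t : ℝ, μ {ω | s < A ω} * μ {ω | t < B ω} ≤ μ {ω | s < A ω ∧ t < B ω})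
    (γ : ℝ≥0∞) (hBIED : IsIED μ B H γ)
    (a : ℝ) (ha : a = sSup {x : ℝ | μ {ω | A ω < x} = 0}) :
    IsLDM μ A B H (fun y =>
      if a * y < 1 then γ * ENNReal.ofReal ((1 - a * y) ^ (-ρ)) else ⊤) := by
  -- basic facts about a
  set S : Set ℝ := {x : ℝ | μ {ω | A ω < x} = 0} with hSdef
  have hA0' : μ {ω | A ω < 0} = 0 := by
    have := hA0
    rw [ae_iff] at this
    simpa [not_le] using this
  have hB0' : μ {ω | B ω < 0} = 0 := by
    have := hB0
    rw [ae_iff] at this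
    simpa [not_le] using this
  have hS0 : (0:ℝ) ∈ S := hA0'
  have hSne : S.Nonempty := ⟨0, hS0⟩
  have hSdown : ∀ x ∈ S, ∀ x' ≤ x, x' ∈ S := by
    intro x hx x' hx'
    exact measure_mono_null (fun ω hω => lt_of_lt_of_le hω hx') hx
  have hSbdd : BddAbove S := by
    obtain ⟨n, hn⟩ : ∃ n : ℕ, μ {ω | A ω < n} ≠ 0 := by
      by_contra hcon
      push_neg at hcon
      have huniv : (⋃ n : ℕ, {ω | A ω < (n:ℝ)}) = Set.univ := by
        ext ω
        simp only [Set.mem_iUnion, Set.mem_setOf_eq, Set.mem_univ, iff_true]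
        obtain ⟨n, hn⟩ := exists_nat_gt (A ω)
        exact ⟨n, hn⟩
      have := measure_iUnion_null (fun n : ℕ => hcon n)
      rw [huniv] at this
      simp [measure_univ] at this
    refine ⟨n, fun x hx => ?_⟩
    by_contra hxn
    push_neg at hxn
    exact hn (measure_mono_null (fun ω hω => lt_trans hω hxn) hx)
  have ha0 : 0 ≤ a := ha ▸ le_csSup hSbdd hS0
  have hAa : μ {ω | A ω < a} = 0 := by
    have hun : {ω | A ω < a} = ⋃ n : ℕ, {ω | A ω < a - 1/(n+1)} := by
      ext ω
      simp only [Set.mem_setOf_eq, Set.mem_iUnion]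
      constructor
      · intro h
        obtain ⟨n, hn⟩ := exists_nat_one_div_lt (sub_pos.2 h)
        exact ⟨n, by linarith⟩
      · rintro ⟨n, hn⟩
        have : (0:ℝ) < 1/(n+1) := by positivity
        linarith
    rw [hun]
    apply measure_iUnion_null
    intro n
    have hlt : a - 1/(n+1) < sSup S := by
      rw [← ha]
      have : (0:ℝ) < 1/(n+1) := by positivity
      linarith
    obtain ⟨x, hxS, hxgt⟩ := exists_lt_of_lt_csSup hSne hlt
    exact hSdown x hxS _ (le_of_lt hxgt)
  have hApos : ∀ c, a < c → μ {ω | A ω < c} ≠ 0 := by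
    intro c hc hcon
    have : c ≤ a := ha ▸ le_csSup hSbdd hcon
    linarith
  -- limit machinery
  have hHtop : Tendsto (fun ε => ENNReal.ofReal (H ε)) (𝓝[>](0:ℝ)) (𝓝 ⊤) :=
    ENNReal.tendsto_ofReal_atTop.comp (H_atTop hH)
  have hconst0 : ∀ K : ℝ≥0∞, K ≠ ⊤ →
      Tendsto (fun ε => K / ENNReal.ofReal (H ε)) (𝓝[>](0:ℝ)) (𝓝 0) := by
    intro K hK
    have hinv : Tendsto (fun ε => (ENNReal.ofReal (H ε))⁻¹) (𝓝[>](0:ℝ)) (𝓝 0) := by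
      have := ENNReal.tendsto_inv_iff.2 hHtop
      simpa using this
    have := ENNReal.Tendsto.const_mul hinv (Or.inr hK)
    simpa [div_eq_mul_inv] using this
  intro y hy
  simp only
  by_cases hay : a * y < 1
  · rw [if_pos hay]
    set s₀ : ℝ := 1 - a * y with hs₀
    have hs₀pos : 0 < s₀ := by simp only [hs₀]; linarith
    set L : ℝ≥0∞ := γ * ENNReal.ofReal ((1 - a*y) ^ (-ρ)) with hL
    set f : ℝ → ℝ≥0∞ :=
      fun ε => negLog (μ {ω | ε * A ω * y + B ω < ε}) / ENNReal.ofReal (H ε) with hf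
    -- lower bound on liminf
    have hl : Tendsto (fun ε => negLog (μ {ω | B ω < s₀ * ε}) / ENNReal.ofReal (H ε))
        (𝓝[>](0:ℝ)) (𝓝 L) := scaled_IED μ B hH hBIED hs₀pos
    have hle : ∀ᶠ ε in 𝓝[>](0:ℝ),
        negLog (μ {ω | B ω < s₀ * ε}) / ENNReal.ofReal (H ε) ≤ f ε := by
      filter_upwards [self_mem_nhdsWithin] with ε hε
      have hεpos : (0:ℝ) < ε := hε
      have hsub : {ω | ε * A ω * y + B ω < ε} ⊆ {ω | B ω < s₀ * ε} ∪ {ω | A ω < a} := by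
        intro ω hω
        simp only [Set.mem_setOf_eq] at hω
        by_cases hAω : A ω < a
        · exact Or.inr hAω
        · push_neg at hAω
          left
          simp only [Set.mem_setOf_eq]
          have : ε * a * y ≤ ε * A ω * y :=
            mul_le_mul_of_nonneg_right (mul_le_mul_of_nonneg_left hAω hεpos.le) hy
          simp only [hs₀]
          nlinarith
      have hmeas : μ {ω | ε * A ω * y + B ω < ε} ≤ μ {ω | B ω < s₀ * ε} := by
        calc μ {ω | ε * A ω * y + B ω < ε} ≤ μ ({ω | B ω < s₀ * ε} ∪ {ω | A ω < a}) :=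
              measure_mono hsub
          _ ≤ μ {ω | B ω < s₀ * ε} + μ {ω | A ω < a} := measure_union_le _ _
          _ = μ {ω | B ω < s₀ * ε} := by rw [hAa, add_zero]
      exact ENNReal.div_le_div_right (negLog_anti (by finiteness) hmeas) _
    have hliminf : L ≤ liminf f (𝓝[>](0:ℝ)) := by
      rw [← hl.liminf_eq]
      exact liminf_le_liminf hle
    -- upper bound on limsup
    have hup : ∀ c, a < c → c * y < 1 →
        limsup f (𝓝[>](0:ℝ)) ≤ γ * ENNReal.ofReal ((1 - c*y) ^ (-ρ)) := by
      intro c hc hcy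
      set t₀ : ℝ := 1 - c * y with ht₀
      have ht₀pos : 0 < t₀ := by simp only [ht₀]; linarith
      have hAc : μ {ω | A ω ≤ c} ≠ 0 := by
        intro h0
        have hsub' : {ω | A ω < c} ⊆ {ω | A ω ≤ c} := fun ω hω => by
          simp only [Set.mem_setOf_eq] at hω ⊢; exact le_of_lt hω
        exact hApos c hc (measure_mono_null hsub' h0)
      set K : ℝ≥0∞ := negLog (μ {ω | A ω ≤ c}) with hK
      have hKtop : K ≠ ⊤ := negLog_ne_top hAc
      set u : ℝ → ℝ≥0∞ := fun ε => K / ENNReal.ofReal (H ε) +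
        negLog (μ {ω | B ω < t₀ * ε}) / ENNReal.ofReal (H ε) with hu
      have hulim : Tendsto u (𝓝[>](0:ℝ)) (𝓝 (γ * ENNReal.ofReal (t₀ ^ (-ρ)))) := by
        have := (hconst0 K hKtop).add (scaled_IED μ B hH hBIED ht₀pos)
        simpa using this
      have hfu : ∀ᶠ ε in 𝓝[>](0:ℝ), f ε ≤ u ε := by
        filter_upwards [self_mem_nhdsWithin] with ε hε
        have hεpos : (0:ℝ) < ε := hε
        have hsub : {ω | A ω ≤ c ∧ B ω < t₀ * ε} ⊆ {ω | ε * A ω * y + B ω < ε} := by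
          rintro ω ⟨h1, h2⟩
          simp only [Set.mem_setOf_eq]
          have : ε * A ω * y ≤ ε * c * y :=
            mul_le_mul_of_nonneg_right (mul_le_mul_of_nonneg_left h1 hεpos.le) hy
          simp only [ht₀] at h2
          nlinarith
        have hmeas : μ {ω | A ω ≤ c} * μ {ω | B ω < t₀ * ε} ≤
            μ {ω | ε * A ω * y + B ω < ε} :=
          le_trans (pqd_mixed μ A B hA hB hPQD c (t₀ * ε)) (measure_mono hsub)
        have h1 : negLog (μ {ω | ε * A ω * y + B ω < ε}) ≤
            K + negLog (μ {ω | B ω < t₀ * ε}) :=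
          le_trans (negLog_anti (by finiteness) hmeas)
            (negLog_mul_le (by finiteness) (by finiteness))
        calc f ε ≤ (K + negLog (μ {ω | B ω < t₀ * ε})) / ENNReal.ofReal (H ε) :=
              ENNReal.div_le_div_right h1 _
          _ = u ε := by rw [ENNReal.add_div]
      calc limsup f (𝓝[>](0:ℝ)) ≤ limsup u (𝓝[>](0:ℝ)) := limsup_le_limsup hfu
        _ = γ * ENNReal.ofReal (t₀ ^ (-ρ)) := hulim.limsup_eq
    -- pass to the limit c → a
    have hlimsup : limsup f (𝓝[>](0:ℝ)) ≤ L := by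
      set cseq : ℕ → ℝ := fun n => a + s₀ / ((y+1) * (n+1)) with hcseq
      have hcgt : ∀ n, a < cseq n := by
        intro n
        have : 0 < s₀ / ((y+1) * (n+1)) := by positivity
        simp only [hcseq]; linarith
      have hclt : ∀ n, cseq n * y < 1 := by
        intro n
        simp only [hcseq]
        have hn1 : (1:ℝ) ≤ (n:ℝ) + 1 := by have := Nat.cast_nonneg (α := ℝ) n; linarith
        have hy1 : y < y + 1 := by linarith
        have key : s₀ / ((y+1) * (n+1)) * y < s₀ := by
          rcases eq_or_lt_of_le hy with h0 | h0
          · rw [← h0]; simpa using hs₀pos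
          · rw [div_mul_eq_mul_div, div_lt_iff₀ (by positivity)]
            have h2 : y < (y+1) * ((n:ℝ)+1) := by nlinarith
            nlinarith
        have expand : (a + s₀ / ((y+1) * (n+1))) * y = a * y + s₀ / ((y+1) * (n+1)) * y := by
          ring
        rw [expand]
        simp only [hs₀] at key ⊢
        linarith
      have hvlim : Tendsto (fun n : ℕ => γ * ENNReal.ofReal ((1 - cseq n * y) ^ (-ρ)))
          atTop (𝓝 L) := by
        have hcl : Tendsto (fun n : ℕ => 1 - cseq n * y) atTop (𝓝 s₀) := by
          have h1 : Tendsto (fun n : ℕ => s₀ / ((y+1) * (n+1))) atTop (𝓝 0) := by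
            have h2 : Tendsto (fun n : ℕ => 1 / ((n:ℝ)+1)) atTop (𝓝 0) :=
              tendsto_one_div_add_atTop_nhds_zero_nat
            have h3 := h2.const_mul (s₀ / (y+1))
            simp only [mul_zero] at h3
            apply h3.congr
            intro n
            field_simp
          have h4 : Tendsto (fun n : ℕ => cseq n) atTop (𝓝 a) := by
            have h0 : Tendsto (fun n : ℕ => a + s₀ / ((y+1) * (n+1))) atTop (𝓝 (a + 0)) :=
              tendsto_const_nhds.add h1
            simpa [hcseq] using h0
          have h5 := (h4.const_mul y).const_sub 1
          simp only [hs₀]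
          convert h5 using 2 with n
          · ring
          · ring
        have hrpow : Tendsto (fun n : ℕ => (1 - cseq n * y) ^ (-ρ)) atTop (𝓝 (s₀ ^ (-ρ))) := by
          have hcont : ContinuousAt (fun x : ℝ => x ^ (-ρ)) s₀ :=
            Real.continuousAt_rpow_const s₀ (-ρ) (Or.inl (ne_of_gt hs₀pos))
          exact hcont.tendsto.comp hcl
        have hof := ENNReal.tendsto_ofReal hrpow
        rcases eq_or_ne γ ⊤ with hγ | hγ
        · have hall : ∀ n, γ * ENNReal.ofReal ((1 - cseq n * y) ^ (-ρ)) = ⊤ := by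
            intro n
            rw [hγ, ENNReal.top_mul]
            simp only [ne_eq, ENNReal.ofReal_eq_zero, not_le]
            exact Real.rpow_pos_of_pos (by linarith [hclt n]) _
          have hLtop : L = ⊤ := by
            rw [hL, hγ, ENNReal.top_mul]
            simp only [ne_eq, ENNReal.ofReal_eq_zero, not_le]
            exact Real.rpow_pos_of_pos hs₀pos _
          rw [hLtop]
          simp only [hall]
          exact tendsto_const_nhds
        · have := ENNReal.Tendsto.const_mul hof (Or.inr hγ)
          simpa [hL, hs₀] using this
      exact ge_of_tendsto hvlim (Eventually.of_forall fun n => hup (cseq n) (hcgt n) (hclt n))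
    exact tendsto_of_le_liminf_of_limsup_le hliminf hlimsup
  · rw [if_neg hay]
    push_neg at hay
    have hev : ∀ᶠ ε in 𝓝[>](0:ℝ),
        negLog (μ {ω | ε * A ω * y + B ω < ε}) / ENNReal.ofReal (H ε) = ⊤ := by
      filter_upwards [self_mem_nhdsWithin] with ε hε
      have hεpos : (0:ℝ) < ε := hε
      have hsub : {ω | ε * A ω * y + B ω < ε} ⊆ {ω | A ω < a} ∪ {ω | B ω < 0} := by
        intro ω hω
        simp only [Set.mem_setOf_eq, Set.mem_union] at hω ⊢
        by_contra hcon
        push_neg at hcon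
        obtain ⟨h1, h2⟩ := hcon
        have h3 : ε * a * y ≤ ε * A ω * y :=
          mul_le_mul_of_nonneg_right (mul_le_mul_of_nonneg_left h1 hεpos.le) hy
        have h4 : ε ≤ ε * a * y := by nlinarith
        linarith
      have hzero : μ {ω | ε * A ω * y + B ω < ε} = 0 := by
        apply measure_mono_null hsub
        exact measure_union_null hAa hB0'
      rw [hzero]
      have : negLog 0 = ⊤ := by simp [negLog]
      rw [this, ENNReal.top_div, if_neg ENNReal.ofReal_ne_top]
    have hev' : (fun ε => negLog (μ {ω | ε * A ω * y + B ω < ε}) / ENNReal.ofReal (H ε))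
        =ᶠ[𝓝[>](0:ℝ)] (fun _ => (⊤:ℝ≥0∞)) := hev
    exact Tendsto.congr' hev'.symm tendsto_const_nhds
end

section
/- Let A and B be nonnegative, positively quadrant dependent random variables, suppose B is an IED^ρ_H(γ)-random variable with γ ∈ (0,∞), and let a = ess inf(A). Let g be the (ρ,H)-LDM of (A,B), given by g(y) = γ(1-ay)^{-ρ} for y ∈ [0,1/a) and g(y) = ∞ for y ≥ 1/a. Then φ_ρ(λ) = ( γ^{1/(1+ρ)} + a^{ρ/(1+ρ)} λ^{1/(1+ρ)} )^{1+ρ} for λ ≥ 0, and λ* = γ (1 - a^{ρ/(1+ρ)})^{-(1+ρ)} when a < 1 while λ* = ∞ when a ≥ 1. -/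
open MeasureTheory ProbabilityTheory Filter Set Topology
open scoped ENNReal

/-! ### Auxiliary real-analysis lemmas -/

/-- Two-term Hölder inequality for real rpow. -/
lemma holder2 {θ X Y U V : ℝ} (hθ : 0 < θ) (hθ1 : θ < 1)
    (hX : 0 ≤ X) (hY : 0 ≤ Y) (hU : 0 ≤ U) (hV : 0 ≤ V) :
    X ^ θ * Y ^ (1-θ) + U ^ θ * V ^ (1-θ) ≤ (X+U) ^ θ * (Y+V) ^ (1-θ) := by
  have hθ1' : (0:ℝ) < 1 - θ := by linarith
  rcases eq_or_lt_of_le (by positivity : (0:ℝ) ≤ X + U) with hP | hP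
  · have hX0 : X = 0 := by linarith
    have hU0 : U = 0 := by linarith
    simp [hX0, hU0, Real.zero_rpow hθ.ne']
  rcases eq_or_lt_of_le (by positivity : (0:ℝ) ≤ Y + V) with hQ | hQ
  · have hY0 : Y = 0 := by linarith
    have hV0 : V = 0 := by linarith
    simp [hY0, hV0, Real.zero_rpow hθ1'.ne']
  have h1 := Real.geom_mean_le_arith_mean2_weighted hθ.le hθ1'.le
    (div_nonneg hX hP.le) (div_nonneg hY hQ.le) (by ring)
  have h2 := Real.geom_mean_le_arith_mean2_weighted hθ.le hθ1'.le
    (div_nonneg hU hP.le) (div_nonneg hV hQ.le) (by ring)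
  have hsum : θ * (X/(X+U)) + (1-θ) * (Y/(Y+V)) + (θ * (U/(X+U)) + (1-θ) * (V/(Y+V))) = 1 := by
    field_simp
    ring
  have key : (X/(X+U)) ^ θ * (Y/(Y+V)) ^ (1-θ) + (U/(X+U)) ^ θ * (V/(Y+V)) ^ (1-θ) ≤ 1 := by
    calc _ ≤ θ * (X/(X+U)) + (1-θ) * (Y/(Y+V)) + (θ * (U/(X+U)) + (1-θ) * (V/(Y+V))) :=
            add_le_add h1 h2
      _ = 1 := hsum
  rw [Real.div_rpow hX hP.le, Real.div_rpow hY hQ.le, Real.div_rpow hU hP.le,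
    Real.div_rpow hV hQ.le, div_mul_div_comm, div_mul_div_comm, ← add_div,
    div_le_one (by positivity)] at key
  linarith

/-- Lower bound for part 1. -/
lemma key1 {ρ gr lr a y : ℝ} (hρ : 0 < ρ) (hgr : 0 < gr) (hlr : 0 ≤ lr) (ha : 0 ≤ a)
    (hy : 0 < y) (hay : a * y < 1) :
    (gr ^ (1/(1+ρ)) + a ^ (ρ/(1+ρ)) * lr ^ (1/(1+ρ))) ^ (1+ρ)
      ≤ gr * (1-a*y) ^ (-ρ) + lr * y ^ (-ρ) := by
  have hq : (0:ℝ) < 1+ρ := by linarith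
  set θ : ℝ := 1/(1+ρ) with hθdef
  have hθ : 0 < θ := by positivity
  have hθ1 : θ < 1 := by rw [hθdef, div_lt_one hq]; linarith
  have hρθ : ρ/(1+ρ) = 1-θ := by rw [hθdef]; field_simp; ring
  have hexp : -ρ*θ + (1-θ) = 0 := by rw [hθdef]; field_simp; ring
  have hθq : θ*(1+ρ) = 1 := by rw [hθdef]; field_simp
  have hs : (0:ℝ) < 1 - a*y := by linarith
  have e1 : (gr * (1-a*y)^(-ρ))^θ * (1-a*y)^(1-θ) = gr^θ := by
    rw [Real.mul_rpow hgr.le (by positivity), ← Real.rpow_mul hs.le, mul_assoc,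
      ← Real.rpow_add hs, hexp, Real.rpow_zero, mul_one]
  have e2 : (lr * y^(-ρ))^θ * (a*y)^(1-θ) = a^(1-θ) * lr^θ := by
    rw [Real.mul_rpow hlr (by positivity), ← Real.rpow_mul hy.le,
      Real.mul_rpow ha hy.le]
    calc lr^θ * y^(-ρ*θ) * (a^(1-θ) * y^(1-θ))
        = a^(1-θ) * lr^θ * (y^(-ρ*θ) * y^(1-θ)) := by ring
      _ = a^(1-θ) * lr^θ := by
          rw [← Real.rpow_add hy, hexp, Real.rpow_zero, mul_one]
  have h := holder2 hθ hθ1 (by positivity : (0:ℝ) ≤ gr * (1-a*y)^(-ρ)) hs.le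
    (by positivity : (0:ℝ) ≤ lr * y^(-ρ)) (by positivity : (0:ℝ) ≤ a*y)
  rw [e1, e2, show (1-a*y) + a*y = 1 by ring, Real.one_rpow, mul_one] at h
  have h2 := Real.rpow_le_rpow (by positivity) h hq.le
  rw [← Real.rpow_mul (by positivity), hθq, Real.rpow_one] at h2
  rw [hρθ]
  exact h2

/-- Attainment for part 1. -/
lemma key2 {ρ gr lr a : ℝ} (hρ : 0 < ρ) (hgr : 0 < gr) (hlr : 0 < lr) (ha : 0 < a) :
    ∃ y : ℝ, 0 < y ∧ a*y < 1 ∧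
      gr * (1-a*y) ^ (-ρ) + lr * y ^ (-ρ)
        = (gr ^ (1/(1+ρ)) + a ^ (ρ/(1+ρ)) * lr ^ (1/(1+ρ))) ^ (1+ρ) := by
  have hq : (0:ℝ) < 1+ρ := by linarith
  set θ : ℝ := 1/(1+ρ) with hθdef
  have hθ : 0 < θ := by positivity
  have hρθ : ρ/(1+ρ) = 1-θ := by rw [hθdef]; field_simp; ring
  have hθq : θ*(1+ρ) = 1 := by rw [hθdef]; field_simp
  set u : ℝ := gr ^ θ with hudef
  set v : ℝ := a ^ (1-θ) * lr ^ θ with hvdef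
  have hu : 0 < u := by positivity
  have hv : 0 < v := by positivity
  have huv : 0 < u + v := by linarith
  set t : ℝ := v / (u * a) with htdef
  have ht : 0 < t := by positivity
  refine ⟨t / (1 + a*t), by positivity, ?_, ?_⟩
  · rw [← mul_div_assoc, div_lt_one (by positivity)]; nlinarith [mul_pos ha ht]
  have hgru : u ^ (1+ρ) = gr := by
    rw [hudef, ← Real.rpow_mul hgr.le, hθq, Real.rpow_one]
  have hv' : v ^ (1+ρ) = a^ρ * lr := by
    rw [hvdef, Real.mul_rpow (by positivity) (by positivity),
      ← Real.rpow_mul ha.le, ← Real.rpow_mul hlr.le, hθq, Real.rpow_one,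
      show (1-θ)*(1+ρ) = ρ by rw [hθdef]; field_simp; ring]
  have h1ay : 1 - a * (t / (1+a*t)) = u/(u+v) := by
    rw [htdef]; field_simp; ring
  have hyval : t / (1+a*t) = t*u/(u+v) := by
    rw [htdef]; field_simp
  have HA : (u/(u+v)) ^ (-ρ) = (u+v)^ρ * u^(-ρ) := by
    rw [Real.div_rpow hu.le huv.le, Real.rpow_neg huv.le, div_inv_eq_mul, mul_comm]
  have HB : (t*u/(u+v)) ^ (-ρ) = (u+v)^ρ * (t^(-ρ) * u^(-ρ)) := by
    rw [Real.div_rpow (by positivity) huv.le, Real.mul_rpow ht.le hu.le,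
      Real.rpow_neg huv.le, div_inv_eq_mul, mul_comm]
  have HC : gr * u^(-ρ) = u := by
    rw [← hgru, ← Real.rpow_add hu]; norm_num
  have HD : lr * (t^(-ρ) * u^(-ρ)) = v := by
    have ht1 : t^(-ρ) = v^(-ρ) * (u^ρ * a^ρ) := by
      rw [htdef, Real.div_rpow hv.le (by positivity),
        Real.rpow_neg (mul_nonneg hu.le ha.le), div_inv_eq_mul,
        Real.mul_rpow hu.le ha.le]
    have huu : u^ρ * u^(-ρ) = 1 := by
      rw [← Real.rpow_add hu]; norm_num
    have hvv : v^(1+ρ) * v^(-ρ) = v := by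
      rw [← Real.rpow_add hv]; norm_num
    rw [ht1]
    calc lr * (v^(-ρ) * (u^ρ * a^ρ) * u^(-ρ))
        = (a^ρ * lr) * v^(-ρ) * (u^ρ * u^(-ρ)) := by ring
      _ = v^(1+ρ) * v^(-ρ) * 1 := by rw [← hv', huu]
      _ = v := by rw [mul_one, hvv]
  rw [hρθ, ← hvdef, h1ay, hyval, HA, HB]
  rw [show (u+v)^(1+ρ) = (u+v)^ρ * (u+v) by
    rw [Real.rpow_add huv 1 ρ, Real.rpow_one]; ring]
  linear_combination (u+v)^ρ * HC + (u+v)^ρ * HD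

/-- Lower bound for part 2. -/
lemma key3 {ρ a y : ℝ} (hρ : 0 < ρ) (ha : 0 ≤ a) (ha1 : a < 1)
    (hy : 1 < y) (hay : a*y < 1) :
    (1 - a ^ (ρ/(1+ρ))) ^ (-(1+ρ)) ≤ y^ρ/(y^ρ-1) * (1-a*y) ^ (-ρ) := by
  have hq : (0:ℝ) < 1+ρ := by linarith
  have hy0 : (0:ℝ) < y := by linarith
  set θ : ℝ := 1/(1+ρ) with hθdef
  have hθ : 0 < θ := by positivity
  have hθ1 : θ < 1 := by rw [hθdef, div_lt_one hq]; linarith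
  have hρθ : ρ/(1+ρ) = 1-θ := by rw [hθdef]; field_simp; ring
  have hexp : -ρ*θ + (1-θ) = 0 := by rw [hθdef]; field_simp; ring
  have hθq : θ*(1+ρ) = 1 := by rw [hθdef]; field_simp
  have hyρ : 1 < y^ρ := Real.one_lt_rpow_iff_of_pos hy0 |>.mpr (Or.inl ⟨hy, hρ⟩)
  have hX : (0:ℝ) < 1 - y^(-ρ) := by
    have h1 : y^(-ρ) = (y^ρ)⁻¹ := Real.rpow_neg hy0.le ρ
    rw [h1]
    have h2 : (y^ρ)⁻¹ < 1 := by
      rw [inv_lt_one_iff₀]; right; exact hyρ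
    linarith
  have hs : (0:ℝ) < 1 - a*y := by linarith
  have hw1 : a^(1-θ) < 1 := by
    rcases eq_or_lt_of_le ha with h0 | h0
    · rw [← h0, Real.zero_rpow (by linarith)]; norm_num
    · exact Real.rpow_lt_one ha ha1 (by linarith)
  have eU : (y^(-ρ))^θ * (a*y)^(1-θ) = a^(1-θ) := by
    rw [← Real.rpow_mul hy0.le, Real.mul_rpow ha hy0.le]
    calc y^(-ρ*θ) * (a^(1-θ) * y^(1-θ)) = a^(1-θ) * (y^(-ρ*θ) * y^(1-θ)) := by ring
      _ = a^(1-θ) := by rw [← Real.rpow_add hy0, hexp, Real.rpow_zero, mul_one]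
  have h := holder2 hθ hθ1 hX.le hs.le (by positivity : (0:ℝ) ≤ y^(-ρ))
    (by positivity : (0:ℝ) ≤ a*y)
  rw [eU, show (1 - y^(-ρ)) + y^(-ρ) = 1 by ring, show (1-a*y) + a*y = 1 by ring,
    Real.one_rpow, Real.one_rpow, one_mul] at h
  have h2 : (1 - y^(-ρ))^θ * (1-a*y)^(1-θ) ≤ 1 - a^(1-θ) := by linarith
  have h3 := Real.rpow_le_rpow (by positivity) h2 hq.le
  rw [Real.mul_rpow (by positivity) (by positivity), ← Real.rpow_mul hX.le,
    ← Real.rpow_mul hs.le, hθq, Real.rpow_one,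
    show (1-θ)*(1+ρ) = ρ by rw [hθdef]; field_simp; ring] at h3
  have hXv : 1 - y^(-ρ) = (y^ρ-1)/y^ρ := by
    rw [Real.rpow_neg hy0.le]
    field_simp
  have hL : (0:ℝ) < (y^ρ-1)/y^ρ * (1-a*y)^ρ := by
    exact mul_pos (div_pos (by linarith) (by positivity)) (Real.rpow_pos_of_pos hs ρ)
  rw [hXv] at h3
  have h4 := inv_anti₀ hL h3
  rw [mul_inv, inv_div] at h4
  rw [hρθ, Real.rpow_neg (by linarith : (0:ℝ) ≤ 1 - a^(1-θ)),
    Real.rpow_neg hs.le]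
  exact h4

/-- Attainment for part 2. -/
lemma key4 {ρ a : ℝ} (hρ : 0 < ρ) (ha : 0 < a) (ha1 : a < 1) :
    ∃ y : ℝ, 1 < y ∧ a*y < 1 ∧
      y^ρ/(y^ρ-1) * (1-a*y) ^ (-ρ) = (1 - a ^ (ρ/(1+ρ))) ^ (-(1+ρ)) := by
  have hq : (0:ℝ) < 1+ρ := by linarith
  set θ : ℝ := 1/(1+ρ) with hθdef
  have hθ : 0 < θ := by positivity
  have hρθ : ρ/(1+ρ) = 1-θ := by rw [hθdef]; field_simp; ring
  set w : ℝ := a^(1-θ) with hwdef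
  have hw0 : 0 < w := by positivity
  have hθ1 : θ < 1 := by rw [hθdef, div_lt_one hq]; linarith
  have hw1 : w < 1 := Real.rpow_lt_one ha.le ha1 (by linarith)
  refine ⟨a^(-θ), ?_, ?_, ?_⟩
  · exact Real.one_lt_rpow_iff_of_pos ha |>.mpr (Or.inr ⟨ha1, by linarith⟩)
  · have h : a * a^(-θ) = w := by
      rw [hwdef, show (1-θ) = 1 + -θ by ring, Real.rpow_add ha, Real.rpow_one]
    rw [h]; exact hw1
  · have hay : a * a^(-θ) = w := by
      rw [hwdef, show (1-θ) = 1 + -θ by ring, Real.rpow_add ha, Real.rpow_one]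
    have h1w : (0:ℝ) < 1 - w := by linarith
    have hyρ : (a^(-θ))^ρ = w⁻¹ := by
      rw [← Real.rpow_mul ha.le, hwdef, ← Real.rpow_neg ha.le]
      congr 1
      rw [hθdef]; field_simp; ring
    have hwinv : 1 < w⁻¹ := (one_lt_inv₀ hw0).mpr hw1
    rw [hρθ, ← hwdef, hyρ, hay]
    have e1 : w⁻¹/(w⁻¹-1) = (1-w)⁻¹ := by
      rw [div_eq_iff (by linarith : w⁻¹ - 1 ≠ 0)]
      field_simp
    rw [e1, Real.rpow_neg h1w.le, Real.rpow_neg h1w.le,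
      Real.rpow_add h1w 1 ρ, Real.rpow_one, mul_inv]

/-- The essential infimum bound: `0 ≤ a`. -/
lemma a_nonneg_aux {Ω : Type*} [MeasurableSpace Ω] (μ : Measure Ω) [IsProbabilityMeasure μ]
    (A : Ω → ℝ) (hA0 : ∀ᵐ ω ∂μ, 0 ≤ A ω) :
    0 ≤ sSup {x : ℝ | μ {ω | A ω < x} = 0} := by
  have h0 : μ {ω | A ω < 0} = 0 := by
    have h := ae_iff.mp hA0
    simpa [not_le] using h
  have hmem : (0:ℝ) ∈ {x : ℝ | μ {ω | A ω < x} = 0} := h0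
  have hbdd : BddAbove {x : ℝ | μ {ω | A ω < x} = 0} := by
    obtain ⟨n, hn⟩ : ∃ n : ℕ, μ {ω | A ω < (n:ℝ)} ≠ 0 := by
      by_contra h
      push_neg at h
      have h2 : μ (⋃ n : ℕ, {ω | A ω < (n:ℝ)}) = 0 := measure_iUnion_null h
      have huniv : (⋃ n : ℕ, {ω | A ω < (n:ℝ)}) = Set.univ := by
        ext ω
        simp only [Set.mem_iUnion, Set.mem_univ, iff_true, Set.mem_setOf_eq]
        exact exists_nat_gt (A ω)
      rw [huniv] at h2
      simp [measure_univ] at h2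
    refine ⟨n, fun x hx => ?_⟩
    by_contra hlt
    push_neg at hlt
    exact hn (measure_mono_null (fun ω (hω : A ω < n) => lt_trans hω hlt) hx)
  exact le_csSup hbdd hmem

/-- Proposition `propo:phiABPQD`.
Under the assumptions of Proposition `y31.2` with `γ ∈ (0,∞)`, for the LDM
`g(y) = γ(1-ay)^{-ρ}` (for `ay < 1`; `∞` otherwise) one has
`φ_ρ(λ) = (γ^{1/(1+ρ)} + a^{ρ/(1+ρ)} λ^{1/(1+ρ)})^{1+ρ}` for all `λ ≥ 0`, and
`λ* = γ (1 - a^{ρ/(1+ρ)})^{-(1+ρ)}` when `a < 1`, while `λ* = ∞` when `a ≥ 1`. -/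
theorem stmt13 {Ω : Type*} [MeasurableSpace Ω] (μ : Measure Ω) [IsProbabilityMeasure μ]
    (H : ℝ → ℝ) (ρ : ℝ) (hH : IsRVatZero H ρ)
    (A B : Ω → ℝ) (hA : Measurable A) (hB : Measurable B)
    (hA0 : ∀ᵐ ω ∂μ, 0 ≤ A ω) (hB0 : ∀ᵐ ω ∂μ, 0 ≤ B ω)
    -- positive quadrant dependence
    (hPQD : ∀ s t : ℝ, μ {ω | s < A ω} * μ {ω | t < B ω} ≤ μ {ω | s < A ω ∧ t < B ω})
    (γ : ℝ≥0∞) (hγ0 : 0 < γ) (hγtop : γ ≠ ⊤) (hBIED : IsIED μ B H γ)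
    (a : ℝ) (ha : a = sSup {x : ℝ | μ {ω | A ω < x} = 0})
    (g : ℝ → ℝ≥0∞)
    (hgdef : ∀ y : ℝ,
      g y = if a * y < 1 then γ * ENNReal.ofReal ((1 - a * y) ^ (-ρ)) else ⊤)
    (hgLDM : IsLDM μ A B H g) :
    (∀ l : ℝ≥0∞, l ≠ ⊤ →
        phi g ρ l
          = (γ ^ (1/(1+ρ)) + ENNReal.ofReal a ^ (ρ/(1+ρ)) * l ^ (1/(1+ρ))) ^ (1+ρ))
    ∧ (a < 1 →
        lambdaStar g ρ = γ * ENNReal.ofReal ((1 - a ^ (ρ/(1+ρ))) ^ (-(1+ρ))))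
    ∧ (1 ≤ a → lambdaStar g ρ = ⊤) := by
  have hρ := hH.rho_pos
  have hq : (0:ℝ) < 1+ρ := by linarith
  have ha0 : 0 ≤ a := ha ▸ a_nonneg_aux μ A hA0
  set gr := γ.toReal with hgrdef
  have hgr : 0 < gr := ENNReal.toReal_pos hγ0.ne' hγtop
  have hγval : γ = ENNReal.ofReal gr := (ENNReal.ofReal_toReal hγtop).symm
  refine ⟨?_, ?_, ?_⟩
  · -- Part 1
    intro l hl
    set lr := l.toReal with hlrdef
    have hlr : (0:ℝ) ≤ lr := ENNReal.toReal_nonneg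
    have hlval : l = ENNReal.ofReal lr := (ENNReal.ofReal_toReal hl).symm
    have hRHS : (γ ^ (1/(1+ρ)) + ENNReal.ofReal a ^ (ρ/(1+ρ)) * l ^ (1/(1+ρ))) ^ (1+ρ)
        = ENNReal.ofReal ((gr^(1/(1+ρ)) + a^(ρ/(1+ρ)) * lr^(1/(1+ρ)))^(1+ρ)) := by
      rw [hγval, hlval, ENNReal.ofReal_rpow_of_pos hgr,
        ENNReal.ofReal_rpow_of_nonneg ha0 (by positivity : (0:ℝ) ≤ ρ/(1+ρ)),
        ENNReal.ofReal_rpow_of_nonneg hlr (by positivity : (0:ℝ) ≤ 1/(1+ρ)),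
        ← ENNReal.ofReal_mul (by positivity),
        ← ENNReal.ofReal_add (by positivity) (by positivity),
        ENNReal.ofReal_rpow_of_pos (by positivity)]
    rw [hRHS]
    have hterm : ∀ y : ℝ, 0 < y → a*y < 1 →
        g y + l / ENNReal.ofReal (y^ρ)
          = ENNReal.ofReal (gr*(1-a*y)^(-ρ) + lr * y^(-ρ)) := by
      intro y hy hay
      have hs : (0:ℝ) < 1-a*y := by linarith
      rw [hgdef y, if_pos hay, hγval, hlval,
        ← ENNReal.ofReal_mul hgr.le,
        ← ENNReal.ofReal_div_of_pos (Real.rpow_pos_of_pos hy ρ),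
        ← ENNReal.ofReal_add (mul_nonneg hgr.le (Real.rpow_nonneg hs.le _))
          (by positivity)]
      congr 1
      rw [Real.rpow_neg hy.le, div_eq_mul_inv]
    apply le_antisymm
    · -- upper bound on phi
      by_cases hl0 : l = 0
      · have hM : (gr^(1/(1+ρ)) + a^(ρ/(1+ρ)) * lr^(1/(1+ρ)))^(1+ρ) = gr := by
          have hlr0 : lr = 0 := by rw [hlrdef, hl0]; simp
          rw [hlr0, Real.zero_rpow (by positivity : (0:ℝ) < 1/(1+ρ)).ne', mul_zero, add_zero,
            ← Real.rpow_mul hgr.le, show (1/(1+ρ))*(1+ρ) = 1 by field_simp, Real.rpow_one]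
        rw [hM, ← hγval]
        have h1 : ∀ᶠ y in 𝓝 (0:ℝ), a*y < 1 := by
          have hc : Continuous fun y : ℝ => a*y := continuous_const.mul continuous_id
          have h2 : Tendsto (fun y : ℝ => a*y) (𝓝 0) (𝓝 0) := by
            simpa using hc.tendsto 0
          exact h2.eventually_lt_const zero_lt_one
        have hev : ∀ᶠ y in 𝓝[>] (0:ℝ),
            phi g ρ l ≤ γ * ENNReal.ofReal ((1-a*y)^(-ρ)) := by
          filter_upwards [eventually_nhdsWithin_of_eventually_nhds h1,
            self_mem_nhdsWithin] with y hay hy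
          calc phi g ρ l ≤ g y + l / ENNReal.ofReal (y^ρ) := iInf₂_le y hy
            _ = g y := by rw [hl0, ENNReal.zero_div, add_zero]
            _ = γ * ENNReal.ofReal ((1-a*y)^(-ρ)) := by rw [hgdef y, if_pos hay]
        have htend : Tendsto (fun y => γ * ENNReal.ofReal ((1-a*y)^(-ρ)))
            (𝓝[>] (0:ℝ)) (𝓝 γ) := by
          have h3 : Tendsto (fun y : ℝ => (1-a*y)^(-ρ)) (𝓝 0) (𝓝 1) := by
            have hinner : Tendsto (fun y : ℝ => 1 - a*y) (𝓝 0) (𝓝 1) := by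
              have hcont : Continuous fun y : ℝ => 1 - a*y := by fun_prop
              simpa using hcont.tendsto 0
            have h2 : ContinuousAt (fun t : ℝ => t^(-ρ)) 1 := by
              apply Real.continuousAt_rpow_const
              left; norm_num
            simpa [Real.one_rpow, Function.comp_def] using h2.tendsto.comp hinner
          have h5 : Tendsto (fun y : ℝ => ENNReal.ofReal ((1-a*y)^(-ρ)))
              (𝓝[>] (0:ℝ)) (𝓝 1) := by
            have h6 : Tendsto (fun y : ℝ => ENNReal.ofReal ((1-a*y)^(-ρ)))
                (𝓝[>] (0:ℝ)) (𝓝 (ENNReal.ofReal 1)) :=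
              (ENNReal.continuous_ofReal.tendsto 1).comp
                (h3.mono_left nhdsWithin_le_nhds)
            simpa using h6
          have h7 := ENNReal.Tendsto.const_mul (a := γ) h5 (Or.inl one_ne_zero)
          simpa using h7
        exact ge_of_tendsto htend hev
      · rcases eq_or_lt_of_le ha0 with haz | hapos
        · -- a = 0
          have hM : (gr^(1/(1+ρ)) + a^(ρ/(1+ρ)) * lr^(1/(1+ρ)))^(1+ρ) = gr := by
            rw [← haz, Real.zero_rpow (by positivity : (0:ℝ) < ρ/(1+ρ)).ne', zero_mul,
              add_zero, ← Real.rpow_mul hgr.le,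
              show (1/(1+ρ))*(1+ρ) = 1 by field_simp, Real.rpow_one]
          rw [hM]
          have hev : ∀ᶠ y in atTop,
              phi g ρ l ≤ ENNReal.ofReal gr + ENNReal.ofReal (lr * y^(-ρ)) := by
            filter_upwards [eventually_gt_atTop (0:ℝ)] with y hy
            calc phi g ρ l ≤ g y + l / ENNReal.ofReal (y^ρ) := iInf₂_le y hy
              _ = ENNReal.ofReal (gr*(1-a*y)^(-ρ) + lr * y^(-ρ)) :=
                  hterm y hy (by rw [← haz]; norm_num)
              _ = ENNReal.ofReal (gr + lr * y^(-ρ)) := by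
                  rw [← haz]; norm_num [Real.one_rpow]
              _ = ENNReal.ofReal gr + ENNReal.ofReal (lr * y^(-ρ)) :=
                  ENNReal.ofReal_add hgr.le (by positivity)
          have htend : Tendsto (fun y : ℝ => ENNReal.ofReal gr + ENNReal.ofReal (lr * y^(-ρ)))
              atTop (𝓝 (ENNReal.ofReal gr)) := by
            have h1 : Tendsto (fun y : ℝ => lr * y^(-ρ)) atTop (𝓝 0) := by
              simpa using (tendsto_rpow_neg_atTop hρ).const_mul lr
            have h2 := (ENNReal.continuous_ofReal.tendsto 0).comp h1
            have h3 := h2.const_add (ENNReal.ofReal gr)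
            simpa using h3
          exact ge_of_tendsto htend hev
        · -- a > 0, l > 0
          have hlrpos : 0 < lr := ENNReal.toReal_pos hl0 hl
          obtain ⟨y, hy, hay, heq⟩ := key2 hρ hgr hlrpos hapos
          calc phi g ρ l ≤ g y + l / ENNReal.ofReal (y^ρ) := iInf₂_le y hy
            _ = ENNReal.ofReal (gr*(1-a*y)^(-ρ) + lr * y^(-ρ)) := hterm y hy hay
            _ = _ := by rw [heq]
    · -- lower bound on phi
      refine le_iInf₂ fun y hy => ?_
      rcases lt_or_ge (a*y) 1 with hay | hay
      · rw [hterm y hy hay]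
        exact ENNReal.ofReal_le_ofReal (key1 hρ hgr hlr ha0 hy hay)
      · rw [hgdef y, if_neg (not_lt.mpr hay), top_add]
        exact le_top
  · -- Part 2
    intro ha1
    have hw1 : a^(ρ/(1+ρ)) < 1 := Real.rpow_lt_one ha0 ha1 (by positivity)
    have h1w : (0:ℝ) < 1 - a^(ρ/(1+ρ)) := by linarith
    rw [hγval, ← ENNReal.ofReal_mul hgr.le]
    have hterm2 : ∀ y : ℝ, 1 < y → a*y < 1 →
        ENNReal.ofReal (y^ρ/(y^ρ-1)) * g y
          = ENNReal.ofReal (y^ρ/(y^ρ-1) * (gr * (1-a*y)^(-ρ))) := by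
      intro y hy hay
      have hy0 : (0:ℝ) < y := by linarith
      have hyρ : 1 < y^ρ := Real.one_lt_rpow_iff_of_pos hy0 |>.mpr (Or.inl ⟨hy, hρ⟩)
      have hs : (0:ℝ) < 1-a*y := by linarith
      rw [hgdef y, if_pos hay, hγval, ← ENNReal.ofReal_mul hgr.le,
        ← ENNReal.ofReal_mul (div_nonneg (Real.rpow_nonneg hy0.le ρ) (by linarith : (0:ℝ) ≤ y^ρ-1))]
    apply le_antisymm
    · -- upper bound
      rcases eq_or_lt_of_le ha0 with haz | hapos
      · -- a = 0
        have hval : gr * (1 - a^(ρ/(1+ρ)))^(-(1+ρ)) = gr := by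
          rw [← haz, Real.zero_rpow (by positivity : (0:ℝ) < ρ/(1+ρ)).ne']
          norm_num [Real.one_rpow]
        rw [hval, ← hγval]
        have hev : ∀ᶠ y in atTop,
            lambdaStar g ρ ≤ ENNReal.ofReal (y^ρ/(y^ρ-1)) * γ := by
          filter_upwards [eventually_gt_atTop (1:ℝ)] with y hy
          calc lambdaStar g ρ ≤ ENNReal.ofReal (y^ρ/(y^ρ-1)) * g y := iInf₂_le y hy
            _ = ENNReal.ofReal (y^ρ/(y^ρ-1)) * γ := by
                rw [hgdef y, if_pos (by rw [← haz]; norm_num)]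
                rw [← haz]
                norm_num [Real.one_rpow]
        have htend : Tendsto (fun y : ℝ => ENNReal.ofReal (y^ρ/(y^ρ-1)) * γ)
            atTop (𝓝 γ) := by
          have hA : Tendsto (fun y : ℝ => y^ρ) atTop atTop := tendsto_rpow_atTop hρ
          have hB : Tendsto (fun t : ℝ => t/(t-1)) atTop (𝓝 1) := by
            have hinv : Tendsto (fun t : ℝ => 1 + (t-1)⁻¹) atTop (𝓝 1) := by
              have h1 : Tendsto (fun t : ℝ => (t-1)⁻¹) atTop (𝓝 0) := by
                have h2 : Tendsto (fun t : ℝ => t - 1) atTop atTop :=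
                  tendsto_atTop_add_const_right atTop (-1) tendsto_id
                exact tendsto_inv_atTop_zero.comp h2
              simpa using tendsto_const_nhds.add h1
            apply hinv.congr'
            filter_upwards [eventually_gt_atTop (1:ℝ)] with t ht
            field_simp [sub_ne_zero.mpr ht.ne']; ring
          have hC := hB.comp hA
          have hD := (ENNReal.continuous_ofReal.tendsto 1).comp hC
          rw [ENNReal.ofReal_one] at hD
          have hE := ENNReal.Tendsto.mul_const (b := γ) hD (Or.inl one_ne_zero)
          simpa using hE
        exact ge_of_tendsto htend hev
      · -- a > 0
        obtain ⟨y, hy1, hay, heq⟩ := key4 hρ hapos ha1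
        calc lambdaStar g ρ ≤ ENNReal.ofReal (y^ρ/(y^ρ-1)) * g y := iInf₂_le y hy1
          _ = ENNReal.ofReal (y^ρ/(y^ρ-1) * (gr * (1-a*y)^(-ρ))) := hterm2 y hy1 hay
          _ = ENNReal.ofReal (gr * (1 - a^(ρ/(1+ρ)))^(-(1+ρ))) := by
              rw [show y^ρ/(y^ρ-1) * (gr * (1-a*y)^(-ρ))
                    = gr * (y^ρ/(y^ρ-1) * (1-a*y)^(-ρ)) by ring, heq]
    · -- lower bound
      refine le_iInf₂ fun y hy => ?_
      have hy1 : (1:ℝ) < y := hy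
      have hy0 : (0:ℝ) < y := by linarith
      have hyρ : 1 < y^ρ := Real.one_lt_rpow_iff_of_pos hy0 |>.mpr (Or.inl ⟨hy1, hρ⟩)
      rcases lt_or_ge (a*y) 1 with hay | hay
      · rw [hterm2 y hy1 hay]
        apply ENNReal.ofReal_le_ofReal
        rw [show y^ρ/(y^ρ-1) * (gr * (1-a*y)^(-ρ))
              = gr * (y^ρ/(y^ρ-1) * (1-a*y)^(-ρ)) by ring]
        exact mul_le_mul_of_nonneg_left (key3 hρ ha0 ha1 hy1 hay) hgr.le
      · rw [hgdef y, if_neg (not_lt.mpr hay), ENNReal.mul_top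
          (ENNReal.ofReal_pos.mpr (div_pos (by linarith) (by linarith))).ne']
        exact le_top
  · -- Part 3
    intro ha1
    rw [lambdaStar]
    simp only [iInf_eq_top]
    intro y hy
    have hy1 : (1:ℝ) < y := hy
    have hy0 : (0:ℝ) < y := by linarith
    have hyρ : 1 < y^ρ := Real.one_lt_rpow_iff_of_pos hy0 |>.mpr (Or.inl ⟨hy1, hρ⟩)
    rw [hgdef y, if_neg (by nlinarith : ¬ a*y < 1)]
    exact ENNReal.mul_top
      (ENNReal.ofReal_pos.mpr (div_pos (by linarith) (by linarith))).ne'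
end

section
/- Let μ be a finite positive measure on a compact interval [a,b], absolutely continuous with respect to Lebesgue measure, such that μ(I) > 0 for every subinterval I ⊂ [a,b] of strictly positive length. Let f be a continuous function on [a,b]. Then lim_{ε→0+} ε · log ∫_a^b e^{-f(x)/ε} μ(dx) = -f_min, where f_min = inf_{x∈[a,b]} f(x). -/
open MeasureTheory Filter Set Topology
open scoped ENNReal

/-- Lemma `lemma:minimumExponent`.
Let `μ` be a finite positive measure on `[a,b]`, absolutely continuous with respect
to Lebesgue measure and charging every nondegenerate subinterval of `[a,b]`, and let
`f` be continuous on `[a,b]`. Then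
`lim_{ε→0⁺} ε · log ∫_a^b e^{-f(x)/ε} dμ = -min_{[a,b]} f`. -/
theorem stmt18 (a b : ℝ) (hab : a < b) (μ : Measure ℝ) [IsFiniteMeasure μ]
    (hac : μ ≪ MeasureTheory.volume)
    (hsupp : μ (Set.Icc a b)ᶜ = 0)
    (hpos : ∀ x y : ℝ, a ≤ x → x < y → y ≤ b → 0 < μ (Set.Icc x y))
    (f : ℝ → ℝ) (hf : ContinuousOn f (Set.Icc a b)) :
    Filter.Tendsto
      (fun ε : ℝ => ε * Real.log (∫ x in Set.Icc a b, Real.exp (-f x / ε) ∂μ))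
      (nhdsWithin 0 (Set.Ioi 0)) (nhds (-(sInf (f '' Set.Icc a b)))) := by
  have hne : (Set.Icc a b).Nonempty := Set.nonempty_Icc.2 hab.le
  obtain ⟨x₀, hx₀, hmin⟩ := isCompact_Icc.exists_isMinOn hne hf
  have hm : sInf (f '' Set.Icc a b) = f x₀ :=
    IsLeast.csInf_eq ⟨⟨x₀, hx₀, rfl⟩, by rintro _ ⟨y, hy, rfl⟩; exact hmin hy⟩
  rw [hm]
  set m := f x₀ with hmdef
  set C := (μ (Set.Icc a b)).toReal with hCdef
  have hCpos : 0 < C :=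
    ENNReal.toReal_pos (hpos a b le_rfl hab le_rfl).ne' (measure_ne_top μ _)
  set F : ℝ → ℝ := fun ε => ∫ x in Set.Icc a b, Real.exp (-f x / ε) ∂μ with hFdef
  have hint : ∀ ε : ℝ, 0 < ε →
      IntegrableOn (fun x => Real.exp (-f x / ε)) (Set.Icc a b) μ := by
    intro ε hε
    exact (Real.continuous_exp.comp_continuousOn ((hf.neg).div_const ε)).integrableOn_compact
      isCompact_Icc
  -- upper bound
  have hub : ∀ ε : ℝ, 0 < ε → F ε ≤ Real.exp (-m / ε) * C := by
    intro ε hε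
    have h1 : F ε ≤ ∫ _x in Set.Icc a b, Real.exp (-m / ε) ∂μ := by
      apply setIntegral_mono_on (hint ε hε) (integrableOn_const (measure_ne_top μ _))
        measurableSet_Icc
      intro x hx
      apply Real.exp_le_exp.2
      exact (div_le_div_iff_of_pos_right hε).2 (by have h : f x₀ ≤ f x := hmin hx; linarith)
    calc F ε ≤ ∫ _x in Set.Icc a b, Real.exp (-m / ε) ∂μ := h1
      _ = Real.exp (-m / ε) * C := by rw [setIntegral_const, smul_eq_mul, mul_comm]; rfl
  -- lower bound
  have hlb : ∀ δ : ℝ, 0 < δ → ∃ c : ℝ, 0 < c ∧ ∀ ε : ℝ, 0 < ε →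
      Real.exp (-(m + δ) / ε) * c ≤ F ε := by
    intro δ hδ
    obtain ⟨θ, hθ, hθ'⟩ := Metric.continuousWithinAt_iff.1 (hf x₀ hx₀) δ hδ
    set u := max a (x₀ - θ / 2) with hu
    set v := min b (x₀ + θ / 2) with hv
    have huv : u < v := by
      apply max_lt <;> apply lt_min
      · exact hab
      · linarith [hx₀.1]
      · linarith [hx₀.2]
      · linarith
    have hsub : Set.Icc u v ⊆ Set.Icc a b :=
      Set.Icc_subset_Icc (le_max_left _ _) (min_le_left _ _)
    have hfle : ∀ x ∈ Set.Icc u v, f x ≤ m + δ := by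
      intro x hx
      have hx1 : x ≤ x₀ + θ / 2 := le_trans hx.2 (min_le_right _ _)
      have hx2 : x₀ - θ / 2 ≤ x := le_trans (le_max_right _ _) hx.1
      have hdist : dist x x₀ < θ := by
        rw [Real.dist_eq, abs_lt]; constructor <;> linarith
      have := hθ' (hsub hx) hdist
      rw [Real.dist_eq, abs_lt] at this
      linarith [this.2]
    refine ⟨(μ (Set.Icc u v)).toReal, ENNReal.toReal_pos
      (hpos u v (le_max_left _ _) huv (min_le_left _ _)).ne' (measure_ne_top μ _), ?_⟩
    intro ε hε
    have h1 : ∫ _x in Set.Icc u v, Real.exp (-(m + δ) / ε) ∂μ ≤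
        ∫ x in Set.Icc u v, Real.exp (-f x / ε) ∂μ := by
      apply setIntegral_mono_on (integrableOn_const (measure_ne_top μ _))
        ((hint ε hε).mono_set hsub) measurableSet_Icc
      intro x hx
      apply Real.exp_le_exp.2
      exact (div_le_div_iff_of_pos_right hε).2 (by have h := hfle x hx; linarith)
    have h2 : ∫ x in Set.Icc u v, Real.exp (-f x / ε) ∂μ ≤ F ε := by
      apply setIntegral_mono_set (hint ε hε)
      · filter_upwards with x using (Real.exp_pos _).le
      · exact hsub.eventuallyLE
    calc Real.exp (-(m + δ) / ε) * (μ (Set.Icc u v)).toReal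
        = ∫ _x in Set.Icc u v, Real.exp (-(m + δ) / ε) ∂μ := by
          rw [setIntegral_const, smul_eq_mul, mul_comm]; rfl
      _ ≤ F ε := le_trans h1 h2
  have hFpos : ∀ ε : ℝ, 0 < ε → 0 < F ε := by
    intro ε hε
    obtain ⟨c, hc, hlow⟩ := hlb 1 one_pos
    exact lt_of_lt_of_le (by positivity) (hlow ε hε)
  -- conclusion
  rw [Metric.tendsto_nhdsWithin_nhds]
  intro η hη
  obtain ⟨c, hc, hlow⟩ := hlb (η / 2) (by linarith)
  set K := |Real.log c| + |Real.log C| + 1 with hK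
  have hKpos : 0 < K := by positivity
  refine ⟨η / 4 / K, by positivity, ?_⟩
  intro ε hε hd
  rw [Real.dist_eq, sub_zero] at hd
  replace hε : (0:ℝ) < ε := hε
  rw [abs_of_pos hε] at hd
  have hcK : |Real.log c| ≤ K := by rw [hK]; linarith [abs_nonneg (Real.log C)]
  have hCK : |Real.log C| ≤ K := by rw [hK]; linarith [abs_nonneg (Real.log c)]
  have hεK : ε * K < η / 4 := by
    calc ε * K < η / 4 / K * K := by exact mul_lt_mul_of_pos_right hd hKpos
      _ = η / 4 := div_mul_cancel₀ _ hKpos.ne'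
  have hεc : ε * |Real.log c| < η / 4 :=
    lt_of_le_of_lt (mul_le_mul_of_nonneg_left hcK hε.le) hεK
  have hεC : ε * |Real.log C| < η / 4 :=
    lt_of_le_of_lt (mul_le_mul_of_nonneg_left hCK hε.le) hεK
  -- upper estimate on ε log F ε
  have hupper : ε * Real.log (F ε) ≤ -m + ε * Real.log C := by
    have hlog : Real.log (F ε) ≤ -m / ε + Real.log C := by
      have := Real.log_le_log (hFpos ε hε) (hub ε hε)
      rwa [Real.log_mul (Real.exp_pos _).ne' hCpos.ne', Real.log_exp] at this
    have := mul_le_mul_of_nonneg_left hlog hε.le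
    have heq : ε * (-m / ε + Real.log C) = -m + ε * Real.log C := by
      field_simp
    linarith [this, heq ▸ this]
  -- lower estimate
  have hlower : -(m + η / 2) + ε * Real.log c ≤ ε * Real.log (F ε) := by
    have hlog : -(m + η / 2) / ε + Real.log c ≤ Real.log (F ε) := by
      have := Real.log_le_log (by positivity) (hlow ε hε)
      rwa [Real.log_mul (Real.exp_pos _).ne' hc.ne', Real.log_exp] at this
    have := mul_le_mul_of_nonneg_left hlog hε.le
    have heq : ε * (-(m + η / 2) / ε + Real.log c) = -(m + η / 2) + ε * Real.log c := by
      field_simp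
    linarith [heq ▸ this]
  rw [Real.dist_eq, sub_neg_eq_add, abs_lt]
  constructor
  · have h1 : -(ε * |Real.log c|) ≤ ε * Real.log c := by
      rw [← mul_neg]
      exact mul_le_mul_of_nonneg_left (neg_abs_le _) hε.le
    linarith
  · have h2 : ε * Real.log C ≤ ε * |Real.log C| :=
      mul_le_mul_of_nonneg_left (le_abs_self _) hε.le
    linarith
end

section
/- Let g:[0,∞)→[0,∞) be given by g(x) = 1/2 - 1/(x + 2 + √(4 + x²)), and define φ_1(λ) = inf_{y>0} { g(y) + λ/y } for λ ≥ 0. Then φ_1(λ) = (1/4)(2√(λ - λ²) + 1) for λ ∈ [0, 1/2), and φ_1(λ) = 1/2 for λ ≥ 1/2; moreover λ = 1/2 is the unique fixed point of φ_1, and it equals λ* = inf_{y>1} { (y/(y-1)) g(y) }. -/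
open MeasureTheory ProbabilityTheory Filter Set Topology
open scoped ENNReal

/-- The LDM of Proposition `propo:inverseDependencyPotentialCalculation`:
`g(x) = 1/2 - 1/(x + 2 + √(4 + x²))`. -/
noncomputable def gFV : ℝ → ℝ≥0∞ :=
  fun x => ENNReal.ofReal (1/2 - 1/(x + 2 + Real.sqrt (4 + x^2)))

noncomputable def gRe (x : ℝ) : ℝ := 1/2 - 1/(x + 2 + Real.sqrt (4 + x^2))

lemma gFV_eq (y : ℝ) : gFV y = ENNReal.ofReal (gRe y) := rfl

lemma sq_s (y : ℝ) : Real.sqrt (4 + y^2) ^ 2 = 4 + y^2 := Real.sq_sqrt (by positivity)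

lemma s_nonneg (y : ℝ) : 0 ≤ Real.sqrt (4 + y^2) := Real.sqrt_nonneg _

lemma gRe_eq {y : ℝ} (hy : 0 < y) :
    gRe y = (y - 2 + Real.sqrt (4 + y^2)) / (4*y) := by
  have h1 := sq_s y
  have h0 := s_nonneg y
  have h2 : 0 < y + 2 + Real.sqrt (4 + y^2) := by nlinarith
  unfold gRe
  field_simp
  nlinarith [h1]

lemma s_ge_two (y : ℝ) : 2 ≤ Real.sqrt (4 + y^2) := by
  nlinarith [sq_s y, s_nonneg y, sq_nonneg y]

lemma gRe_nonneg {y : ℝ} (hy : 0 < y) : 0 ≤ gRe y := by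
  rw [gRe_eq hy]
  apply div_nonneg _ (by linarith)
  linarith [s_ge_two y]

lemma s_ge (y : ℝ) (hy : 0 ≤ y) : y ≤ Real.sqrt (4 + y^2) := by
  nlinarith [sq_s y, s_nonneg y]

lemma s_le (y : ℝ) (hy : 0 ≤ y) : Real.sqrt (4 + y^2) ≤ y + 4 := by
  nlinarith [sq_s y, s_nonneg y]

lemma phi_term {l y : ℝ} (hl : 0 ≤ l) (hy : 0 < y) :
    gFV y + ENNReal.ofReal l / ENNReal.ofReal (y ^ (1:ℝ)) = ENNReal.ofReal (gRe y + l / y) := by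
  rw [Real.rpow_one, gFV_eq, ← ENNReal.ofReal_div_of_pos hy,
    ← ENNReal.ofReal_add (gRe_nonneg hy) (by positivity)]

lemma phi_lower {l v : ℝ} (hl : 0 ≤ l)
    (h : ∀ y : ℝ, 0 < y → v ≤ gRe y + l / y) :
    ENNReal.ofReal v ≤ phi gFV 1 (ENNReal.ofReal l) := by
  apply le_iInf₂
  intro y hy
  rw [phi_term hl hy]
  exact ENNReal.ofReal_le_ofReal (h y hy)

lemma phi_upper_at {l v y : ℝ} (hl : 0 ≤ l) (hy : 0 < y)
    (h : gRe y + l / y ≤ v) :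
    phi gFV 1 (ENNReal.ofReal l) ≤ ENNReal.ofReal v := by
  refine le_trans (iInf₂_le y hy) ?_
  rw [phi_term hl hy]
  exact ENNReal.ofReal_le_ofReal h


lemma gRe_le {y : ℝ} (hy : 0 < y) : gRe y ≤ 1/4 + y/16 := by
  rw [gRe_eq hy, div_le_iff₀ (by positivity)]
  nlinarith [sq_s y, s_nonneg y, sq_nonneg (y^2)]

lemma phi_of_lt_half {l : ℝ} (hl0 : 0 ≤ l) (hl : l < 1/2) :
    phi gFV 1 (ENNReal.ofReal l)
      = ENNReal.ofReal ((1/4) * (2 * Real.sqrt (l - l^2) + 1)) := by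
  set r := Real.sqrt (l - l^2) with hrdef
  have hr0 : 0 ≤ r := Real.sqrt_nonneg _
  have hr2 : r^2 = l - l^2 := Real.sq_sqrt (by nlinarith)
  refine le_antisymm ?_ (phi_lower hl0 ?_)
  · -- upper bound
    rcases eq_or_lt_of_le hl0 with h0 | hlpos
    · -- l = 0
      have hl0' : l = 0 := h0.symm
      subst hl0'
      have hr : r = 0 := by simp [hrdef]
      have hv : (1/4 : ℝ) * (2*r+1) = 1/4 := by rw [hr]; ring
      rw [hv]
      apply ENNReal.le_of_forall_pos_le_add
      intro ε hε _
      have hεR : (0:ℝ) < (ε:ℝ) := hε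
      calc phi gFV 1 (ENNReal.ofReal 0)
          ≤ ENNReal.ofReal (1/4 + (ε:ℝ)) := by
            apply phi_upper_at le_rfl (show (0:ℝ) < 16*(ε:ℝ) by positivity)
            have := gRe_le (show (0:ℝ) < 16*(ε:ℝ) by positivity)
            rw [zero_div]
            linarith
        _ ≤ ENNReal.ofReal (1/4) + ENNReal.ofReal (ε:ℝ) := ENNReal.ofReal_add_le
        _ = ENNReal.ofReal (1/4) + ε := by rw [ENNReal.ofReal_coe_nnreal]
    · -- 0 < l
      have ht : 0 < 1 - 2*l := by linarith
      have hrpos : 0 < r := by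
        rcases eq_or_lt_of_le hr0 with h | h
        · exfalso; nlinarith [hr2, h.symm]
        · exact h
      have hy : 0 < 4*r/(1-2*l) := by positivity
      have hsy : Real.sqrt (4 + (4*r/(1-2*l))^2) = 2/(1-2*l) := by
        have h4 : 4 + (4*r/(1-2*l))^2 = (2/(1-2*l))^2 := by
          field_simp; nlinarith [hr2]
        rw [h4, Real.sqrt_sq (by positivity)]
      apply phi_upper_at hl0 hy
      rw [gRe_eq hy, hsy]
      apply le_of_eq
      field_simp
      linear_combination (-8)*hr2
  · -- lower bound
    intro y hy
    have hs2 := sq_s y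
    have hs0 := s_nonneg y
    have key : 2*r*y + 2 - 4*l ≤ Real.sqrt (4 + y^2) := by
      nlinarith [sq_nonneg ((1-2*l)*y - 4*r), mul_nonneg hr0 hy.le]
    have hdiff : gRe y + l/y - (1/4)*(2*r+1)
        = (Real.sqrt (4 + y^2) - (2*r*y + 2 - 4*l))/(4*y) := by
      rw [gRe_eq hy]; field_simp; ring
    have hnn := div_nonneg (by linarith : (0:ℝ) ≤ Real.sqrt (4 + y^2) - (2*r*y + 2 - 4*l))
      (by linarith : (0:ℝ) ≤ 4*y)
    linarith [hdiff]


lemma phi_ge_lb {l y : ℝ} (hl : 1/2 ≤ l) (hy : 0 < y) : 1/2 ≤ gRe y + l/y := by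
  have hs2 := sq_s y
  have hs0 := s_nonneg y
  have hdiff : gRe y + l/y - 1/2
      = (Real.sqrt (4 + y^2) - y + 4*l - 2)/(4*y) := by
    rw [gRe_eq hy]; field_simp; ring
  have hnn := div_nonneg
    (by nlinarith [s_ge y hy.le] : (0:ℝ) ≤ Real.sqrt (4 + y^2) - y + 4*l - 2)
    (by linarith : (0:ℝ) ≤ 4*y)
  linarith [hdiff]

lemma phi_ge_ub {l y : ℝ} (hl : 0 ≤ l) (hy : 0 < y) :
    gRe y + l/y ≤ 1/2 + (1/2 + l)/y := by
  have hdiff : 1/2 + (1/2 + l)/y - (gRe y + l/y)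
      = (y + 4 - Real.sqrt (4 + y^2))/(4*y) := by
    rw [gRe_eq hy]; field_simp; ring
  have hnn := div_nonneg
    (by linarith [s_le y hy.le] : (0:ℝ) ≤ y + 4 - Real.sqrt (4 + y^2))
    (by linarith : (0:ℝ) ≤ 4*y)
  linarith [hdiff]

lemma phi_of_ge_half {l : ℝ} (hl : 1/2 ≤ l) :
    phi gFV 1 (ENNReal.ofReal l) = ENNReal.ofReal (1/2) := by
  have hl0 : (0:ℝ) ≤ l := by linarith
  refine le_antisymm ?_ (phi_lower hl0 fun y hy => phi_ge_lb hl hy)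
  apply ENNReal.le_of_forall_pos_le_add
  intro ε hε _
  have hεR : (0:ℝ) < (ε:ℝ) := hε
  obtain ⟨y, hy, hyε⟩ : ∃ y : ℝ, 0 < y ∧ (1/2 + l)/y ≤ (ε:ℝ) := by
    refine ⟨(1/2 + l)/(ε:ℝ) + 1, by positivity, ?_⟩
    rw [div_le_iff₀ (by positivity)]
    have h4 : (ε:ℝ) * ((1/2 + l)/(ε:ℝ) + 1) = (1/2 + l) + (ε:ℝ) := by
      field_simp
    linarith
  calc phi gFV 1 (ENNReal.ofReal l)
      ≤ ENNReal.ofReal (1/2 + (ε:ℝ)) := by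
        apply phi_upper_at hl0 hy
        linarith [phi_ge_ub hl0 hy, hyε]
    _ ≤ ENNReal.ofReal (1/2) + ENNReal.ofReal (ε:ℝ) := ENNReal.ofReal_add_le
    _ = ENNReal.ofReal (1/2) + ε := by rw [ENNReal.ofReal_coe_nnreal]

lemma lam_term {y : ℝ} (hy : 1 < y) :
    ENNReal.ofReal (y ^ (1:ℝ) / (y ^ (1:ℝ) - 1)) * gFV y
      = ENNReal.ofReal ((y/(y-1)) * gRe y) := by
  have hy0 : (0:ℝ) < y := by linarith
  rw [Real.rpow_one, gFV_eq, ← ENNReal.ofReal_mul (div_nonneg hy0.le (by linarith))]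

lemma lam_diff {y : ℝ} (hy : 1 < y) :
    (y/(y-1)) * gRe y - 1/2 = (Real.sqrt (4 + y^2) - y)/(4*(y-1)) := by
  have hy0 : (0:ℝ) < y := by linarith
  have h0 : y ≠ 0 := ne_of_gt hy0
  have h1 : y - 1 ≠ 0 := by intro h; rw [sub_eq_zero] at h; simp [h] at hy
  rw [gRe_eq hy0]
  field_simp
  ring

lemma lam_lb {y : ℝ} (hy : 1 < y) : 1/2 ≤ (y/(y-1)) * gRe y := by
  have hy0 : (0:ℝ) < y := by linarith
  have hnn := div_nonneg
    (by nlinarith [s_ge y hy0.le, sq_s y, s_nonneg y] :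
        (0:ℝ) ≤ Real.sqrt (4 + y^2) - y)
    (by linarith : (0:ℝ) ≤ 4*(y-1))
  linarith [lam_diff hy]

lemma lam_ub {y : ℝ} (hy : 2 ≤ y) :
    (y/(y-1)) * gRe y ≤ 1/2 + 1/(4*(y-1)) := by
  have hy1 : (1:ℝ) < y := by linarith
  have hsle : Real.sqrt (4 + y^2) - y ≤ 1 := by
    nlinarith [sq_s y, s_nonneg y]
  have h41 : (0:ℝ) < 4*(y-1) := by linarith
  have hb : (Real.sqrt (4 + y^2) - y)/(4*(y-1)) ≤ 1/(4*(y-1)) := by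
    rw [div_le_div_iff₀ h41 h41]
    nlinarith [hsle, h41]
  linarith [lam_diff hy1, hb]

lemma lambdaStar_eq : lambdaStar gFV 1 = ENNReal.ofReal (1/2) := by
  refine le_antisymm ?_ ?_
  · apply ENNReal.le_of_forall_pos_le_add
    intro ε hε _
    have hεR : (0:ℝ) < (ε:ℝ) := hε
    obtain ⟨y, hy2, hyε⟩ : ∃ y : ℝ, 2 ≤ y ∧ 1/(4*(y-1)) ≤ (ε:ℝ) := by
      have hq : (0:ℝ) < 1/(4*(ε:ℝ)) := by positivity
      refine ⟨1/(4*(ε:ℝ)) + 2, by linarith, ?_⟩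
      rw [div_le_iff₀ (by linarith)]
      have h4 : (ε:ℝ) * (4*(1/(4*(ε:ℝ)) + 2 - 1)) = 1 + 4*(ε:ℝ) := by
        field_simp; ring
      linarith
    have hy1 : (1:ℝ) < y := by linarith
    calc lambdaStar gFV 1
        ≤ ENNReal.ofReal (y ^ (1:ℝ) / (y ^ (1:ℝ) - 1)) * gFV y :=
          iInf₂_le y (mem_Ioi.mpr hy1)
      _ = ENNReal.ofReal ((y/(y-1)) * gRe y) := lam_term hy1
      _ ≤ ENNReal.ofReal (1/2 + (ε:ℝ)) := by
          apply ENNReal.ofReal_le_ofReal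
          linarith [lam_ub hy2, hyε]
      _ ≤ ENNReal.ofReal (1/2) + ENNReal.ofReal (ε:ℝ) := ENNReal.ofReal_add_le
      _ = ENNReal.ofReal (1/2) + ε := by rw [ENNReal.ofReal_coe_nnreal]
  · apply le_iInf₂
    intro y hy
    have hy1 : (1:ℝ) < y := hy
    rw [lam_term hy1]
    exact ENNReal.ofReal_le_ofReal (lam_lb hy1)

lemma fixed_point (l : ℝ≥0∞) (hl : l ≠ ⊤) :
    phi gFV 1 l = l ↔ l = ENNReal.ofReal (1/2) := by
  have hL0 : 0 ≤ l.toReal := ENNReal.toReal_nonneg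
  have hlL : ENNReal.ofReal l.toReal = l := ENNReal.ofReal_toReal hl
  by_cases hc : l.toReal < 1/2
  · have hne : l ≠ ENNReal.ofReal (1/2) := by
      intro h
      rw [h, ENNReal.toReal_ofReal (by norm_num)] at hc
      norm_num at hc
    simp only [hne, iff_false]
    intro h
    rw [← hlL, phi_of_lt_half hL0 hc] at h
    have heq : (1/4 : ℝ) * (2 * Real.sqrt (l.toReal - l.toReal^2) + 1) = l.toReal :=
      (ENNReal.ofReal_eq_ofReal_iff (by positivity) hL0).mp h
    set L := l.toReal with hLdef
    set r := Real.sqrt (L - L^2) with hrdef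
    have hr0 : 0 ≤ r := Real.sqrt_nonneg _
    have hr2 : r^2 = L - L^2 := Real.sq_sqrt (by nlinarith)
    have hrL : r = 2*L - 1/2 := by linarith [heq]
    have e1 : (1 - 2*L)*(10*L - 1) = 0 := by
      linear_combination (-4)*hr2 + (4*(r + 2*L - 1/2))*hrL
    have h10 : 10*L - 1 = 0 := by
      rcases mul_eq_zero.mp e1 with h' | h'
      · exfalso; linarith
      · exact h'
    linarith
  · push_neg at hc
    have hphi : phi gFV 1 l = ENNReal.ofReal (1/2) := by
      conv_lhs => rw [← hlL]
      exact phi_of_ge_half hc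
    rw [hphi]
    exact eq_comm


/-- Proposition `propo:phiCalculation`.
For `g(x) = 1/2 - 1/(x+2+√(4+x²))` and `φ_1(λ) = inf_{y>0} {g(y) + λ/y}`:
`φ_1(λ) = (1/4)(2√(λ-λ²)+1)` for `λ ∈ [0,1/2)`, `φ_1(λ) = 1/2` for `λ ≥ 1/2`,
`λ = 1/2` is the unique fixed point of `φ_1`, and it equals
`λ* = inf_{y>1} (y/(y-1)) g(y)`. -/
theorem stmt19 :
    -- value of `φ_1` on `[0,1/2)`
    (∀ l : ℝ, 0 ≤ l → l < 1/2 →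
        phi gFV 1 (ENNReal.ofReal l)
          = ENNReal.ofReal ((1/4) * (2 * Real.sqrt (l - l^2) + 1)))
    -- value of `φ_1` on `[1/2,∞)`
    ∧ (∀ l : ℝ, 1/2 ≤ l → phi gFV 1 (ENNReal.ofReal l) = ENNReal.ofReal (1/2))
    -- `1/2` is the unique fixed point
    ∧ (∀ l : ℝ≥0∞, l ≠ ⊤ → (phi gFV 1 l = l ↔ l = ENNReal.ofReal (1/2)))
    -- the fixed point equals `λ*`
    ∧ lambdaStar gFV 1 = ENNReal.ofReal (1/2) := by
  exact ⟨fun _ h1 h2 => phi_of_lt_half h1 h2, fun _ h => phi_of_ge_half h,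
    fixed_point, lambdaStar_eq⟩
end
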